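/- arXiv:1607.08664 — 5 statements merged into one kernel-verified Lean document; each statement's English description precedes it below -/
import Mathlib

section
/- Let k be a field of characteristic 2. The polynomial f = z^2 + x^3 + w*y^4 lies in the ideal (x^2, y^2, z^2, w^2) of k[x,y,z,w] (so the singularity of type E_8^0 F_4 is not F-pure), while the polynomial g = z^2 + x^3 + x*y^3 + x*y*z + w*y^4 does not lie in (x^2, y^2, z^2, w^2) (so the singularity of type E_7^3 F_4 is F-pure). -/
open MvPolynomial

/-- `z^2 + x^3 + w*y^4` (type `E_8^0 F_4`) lies in `(x^2, y^2, z^2, w^2)` (not F-pure),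
while `z^2 + x^3 + x*y^3 + x*y*z + w*y^4` (type `E_7^3 F_4`) does not (F-pure). -/
theorem stmt_5 (k : Type*) [Field k] [CharP k 2] :
    (X 2 ^ 2 + X 0 ^ 3 + X 3 * X 1 ^ 4 : MvPolynomial (Fin 4) k) ∈
      Ideal.span {(X 0 ^ 2 : MvPolynomial (Fin 4) k), X 1 ^ 2, X 2 ^ 2, X 3 ^ 2} ∧
    (X 2 ^ 2 + X 0 ^ 3 + X 0 * X 1 ^ 3 + X 0 * X 1 * X 2 + X 3 * X 1 ^ 4 :
        MvPolynomial (Fin 4) k) ∉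
      Ideal.span {(X 0 ^ 2 : MvPolynomial (Fin 4) k), X 1 ^ 2, X 2 ^ 2, X 3 ^ 2} := by
  constructor
  · -- membership: f = x·x² + (w·y²)·y² + z²
    have h : (X 2 ^ 2 + X 0 ^ 3 + X 3 * X 1 ^ 4 : MvPolynomial (Fin 4) k)
        = X 0 * X 0 ^ 2 + (X 3 * X 1 ^ 2) * X 1 ^ 2 + X 2 ^ 2 := by ring
    rw [h]
    refine Ideal.add_mem _ (Ideal.add_mem _ ?_ ?_) ?_
    · exact Ideal.mul_mem_left _ _ (Ideal.subset_span (Set.mem_insert _ _))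
    · exact Ideal.mul_mem_left _ _ (Ideal.subset_span
        (Set.mem_insert_iff.2 (Or.inr (Set.mem_insert _ _))))
    · exact Ideal.subset_span
        (Set.mem_insert_iff.2 (Or.inr (Set.mem_insert_iff.2 (Or.inr (Set.mem_insert _ _)))))
  · -- non-membership: look at the coefficient of the monomial x·y·z
    intro hmem
    have hset : ({(X 0 ^ 2 : MvPolynomial (Fin 4) k), X 1 ^ 2, X 2 ^ 2, X 3 ^ 2} :
        Set (MvPolynomial (Fin 4) k)) = Set.range (fun i : Fin 4 => X i ^ 2) := by
      ext p
      simp only [Set.mem_insert_iff, Set.mem_singleton_iff, Set.mem_range]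
      constructor
      · rintro (rfl | rfl | rfl | rfl)
        exacts [⟨0, rfl⟩, ⟨1, rfl⟩, ⟨2, rfl⟩, ⟨3, rfl⟩]
      · rintro ⟨i, rfl⟩
        fin_cases i
        exacts [Or.inl rfl, Or.inr (Or.inl rfl), Or.inr (Or.inr (Or.inl rfl)),
          Or.inr (Or.inr (Or.inr rfl))]
    rw [hset] at hmem
    obtain ⟨c, hc⟩ := Ideal.mem_span_range_iff_exists_fun.mp hmem
    set d : Fin 4 →₀ ℕ := Finsupp.single 0 1 + Finsupp.single 1 1 + Finsupp.single 2 1 with hd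
    have hdval : ∀ i : Fin 4, d i = if i = 0 ∨ i = 1 ∨ i = 2 then 1 else 0 := by
      intro i
      fin_cases i <;> simp [hd, Finsupp.single_apply]
    have key := congrArg (coeff d) hc
    rw [Fin.sum_univ_four] at key
    simp only [coeff_add] at key
    have hgen : ∀ i : Fin 4, coeff d (c i * X i ^ 2) = 0 := by
      intro i
      rw [X_pow_eq_monomial, coeff_mul_monomial']
      rw [if_neg]
      rw [Finsupp.single_le_iff, hdval]
      split <;> omega
    rw [hgen 0, hgen 1, hgen 2, hgen 3] at key
    have e1 : (X 0 * X 1 ^ 3 : MvPolynomial (Fin 4) k)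
        = monomial (Finsupp.single 0 1 + Finsupp.single 1 3) 1 := by
      rw [X_pow_eq_monomial, X, monomial_mul, one_mul]
    have e2 : (X 0 * X 1 * X 2 : MvPolynomial (Fin 4) k) = monomial d 1 := by
      rw [hd, X, X, X, monomial_mul, monomial_mul, one_mul, one_mul]
    have e3 : (X 3 * X 1 ^ 4 : MvPolynomial (Fin 4) k)
        = monomial (Finsupp.single 3 1 + Finsupp.single 1 4) 1 := by
      rw [X_pow_eq_monomial, X, monomial_mul, one_mul]
    rw [X_pow_eq_monomial, X_pow_eq_monomial, e1, e2, e3] at key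
    rw [coeff_monomial, coeff_monomial, coeff_monomial, coeff_monomial, coeff_monomial] at key
    rw [if_neg, if_neg, if_neg, if_pos rfl, if_neg] at key
    · simp at key
    · intro h
      have := DFunLike.congr_fun h 1
      rw [hdval] at this
      simp [Finsupp.single_apply] at this
    · intro h
      have := DFunLike.congr_fun h 1
      rw [hdval] at this
      simp [Finsupp.single_apply] at this
    · intro h
      have := DFunLike.congr_fun h 0
      rw [hdval] at this
      simp [Finsupp.single_apply] at this
    · intro h
      have := DFunLike.congr_fun h 2
      rw [hdval] at this
      simp [Finsupp.single_apply] at this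
end

section
/- Let k be an algebraically closed field of characteristic 2, n ≥ 2 an integer, and f_n = z^2 + x*y^n + x*y*z + w*x^2 in k[x,y,z,w]. A point (a,b,c,d) on the hypersurface f_n = 0 is singular (all partials and f_n vanish) if and only if a = b = c = 0; hence the singular locus is the line {x = y = z = 0}. -/
open MvPolynomial

/-- Type `D_{2n}^{n-1} B_n`: the singular locus of
`z^2 + x*y^n + x*y*z + w*x^2 = 0` (n ≥ 2) over an algebraically closed field of
characteristic 2 is the line `{x = y = z = 0}`. -/
theorem stmt_8 (k : Type*) [Field k] [IsAlgClosed k] [CharP k 2]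
    (n : ℕ) (hn : 2 ≤ n) (f : MvPolynomial (Fin 4) k)
    (hf : f = X 2 ^ 2 + X 0 * X 1 ^ n + X 0 * X 1 * X 2 + X 3 * X 0 ^ 2)
    (a b c d : k) (hmem : eval ![a, b, c, d] f = 0) :
    (∀ i : Fin 4, eval ![a, b, c, d] (pderiv i f) = 0) ↔ (a = 0 ∧ b = 0 ∧ c = 0) := by
  have h2 : (2 : k) = 0 := by
    have := CharP.cast_eq_zero k 2; exact_mod_cast this
  subst hf
  simp only [map_add, map_mul, map_pow, pderiv_X, pderiv_pow, Pi.single_apply]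
  constructor
  · intro h
    have h3 := h 3
    have h0 := h 0
    simp [pderiv_X, pderiv_pow, Pi.single_apply, Fin.ext_iff] at h3 h0
    -- h3 should give a^2 = 0
    have ha : a = 0 := by
      have : a ^ 2 = 0 := by
        simpa (config := { decide := true }) [pderiv_X, pderiv_pow, Pi.single_apply] using h 3
      exact pow_eq_zero_iff (by norm_num) |>.mp this
    have hc : c = 0 := by
      have : c ^ 2 = 0 := by
        simpa [ha] using hmem
      exact pow_eq_zero_iff (by norm_num) |>.mp this
    have hb : b = 0 := by
      have hbn : b ^ n = 0 := by
        have := h 0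
        simpa (config := { decide := true }) [ha, hc] using this
      exact pow_eq_zero_iff (by omega) |>.mp hbn
    exact ⟨ha, hb, hc⟩
  · rintro ⟨ha, hb, hc⟩ i
    fin_cases i <;>
      simp (config := { decide := true }) [pderiv_X, pderiv_pow, Pi.single_apply, ha, hb, hc,
        zero_pow (by omega : n ≠ 0), zero_pow (by omega : n - 1 ≠ 0)]
end

section
/- Let k be an algebraically closed field of characteristic 2 and f = z^2 + x^2*y + y^2*z + x*y*z + w*y^3 in k[x,y,z,w] (type D_5^1 C_3). Then: (1) the singular locus of f = 0 is the line {x = y = z = 0}; and (2) f ∉ (x^2, y^2, z^2, w^2), so the hypersurface is F-pure at the origin by Fedder's criterion. -/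
open MvPolynomial

/-- Type `D_5^1 C_3`: for `f = z^2 + x^2*y + y^2*z + x*y*z + w*y^3`,
(1) the singular locus is the line `{x = y = z = 0}`, and
(2) `f ∉ (x^2, y^2, z^2, w^2)`, so the hypersurface is F-pure at the origin. -/
theorem stmt_9 (k : Type*) [Field k] [IsAlgClosed k] [CharP k 2]
    (f : MvPolynomial (Fin 4) k)
    (hf : f = X 2 ^ 2 + X 0 ^ 2 * X 1 + X 1 ^ 2 * X 2 + X 0 * X 1 * X 2 + X 3 * X 1 ^ 3) :
    (∀ a b c d : k, eval ![a, b, c, d] f = 0 →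
      ((∀ i : Fin 4, eval ![a, b, c, d] (pderiv i f) = 0) ↔ (a = 0 ∧ b = 0 ∧ c = 0))) ∧
    f ∉ Ideal.span {(X 0 ^ 2 : MvPolynomial (Fin 4) k), X 1 ^ 2, X 2 ^ 2, X 3 ^ 2} := by
  subst hf
  constructor
  · intro a b c d hf0
    simp only [map_add, map_mul, map_pow, eval_X] at hf0
    simp only [Matrix.cons_val_zero, Matrix.cons_val_one, Matrix.head_cons,
      Matrix.cons_val_two, Matrix.tail_cons, Matrix.cons_val_three,
      Matrix.head_fin_const] at hf0
    constructor
    · intro h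
      have h3 := h 3
      have h1 := h 1
      simp [pderiv_X, Pi.single_apply] at h3 h1
      subst h3
      have hc : c = 0 := by
        have : c ^ 2 = 0 := by linear_combination hf0
        exact pow_eq_zero_iff (n := 2) (by norm_num) |>.mp this
      subst hc
      have ha : a = 0 := by
        have : a ^ 2 = 0 := by linear_combination h1
        exact pow_eq_zero_iff (n := 2) (by norm_num) |>.mp this
      exact ⟨ha, rfl, rfl⟩
    · rintro ⟨ha, hb, hc⟩ i
      subst ha hb hc
      fin_cases i <;> simp [pderiv_X, Pi.single_apply]
  · intro hmem
    -- the coefficient of the monomial x*y*z vanishes on the ideal but not on f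
    set m0 : Fin 4 →₀ ℕ := Finsupp.single 0 1 + Finsupp.single 1 1 + Finsupp.single 2 1 with hm0
    have key : ∀ i : Fin 4, ∀ g : MvPolynomial (Fin 4) k,
        coeff m0 (g * X i ^ 2) = 0 := by
      intro i g
      rw [X_pow_eq_monomial, coeff_mul_monomial']
      have : ¬ Finsupp.single i 2 ≤ m0 := by
        rw [Finsupp.single_le_iff]
        have hm : m0 i ≤ 1 := by
          fin_cases i <;> simp [hm0, Finsupp.single_apply]
        omega
      rw [if_neg this]
    rw [Ideal.mem_span_insert] at hmem
    obtain ⟨g0, p0, hp0, hmem⟩ := hmem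
    rw [Ideal.mem_span_insert] at hp0
    obtain ⟨g1, p1, hp1, hp0⟩ := hp0
    rw [Ideal.mem_span_insert] at hp1
    obtain ⟨g2, p2, hp2, hp1⟩ := hp1
    rw [Ideal.mem_span_singleton] at hp2
    obtain ⟨g3, hp2⟩ := hp2
    rw [mul_comm] at hp2
    have hcoeff : coeff m0 (X 2 ^ 2 + X 0 ^ 2 * X 1 + X 1 ^ 2 * X 2 + X 0 * X 1 * X 2
        + X 3 * X 1 ^ 3 : MvPolynomial (Fin 4) k) = 1 := by
      simp [hm0, X_pow_eq_monomial, X, monomial_mul, monomial_pow, coeff_add, coeff_monomial,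
        Finsupp.ext_iff, Fin.forall_fin_succ, Finsupp.single_apply]
    rw [hmem, hp0, hp1, hp2] at hcoeff
    simp only [coeff_add, key, add_zero, zero_add] at hcoeff
    exact one_ne_zero hcoeff.symm
end

section
/- Let K = k(ξ,η,θ,ι) be the field of rational functions in four variables over a field k of characteristic 2, and set F = z^2 + (ξ*x + η*y + θ*z + ι)*x^2 + y^3 ∈ K[x,y,z]. Then the Tjurina ideal (∂F/∂x, ∂F/∂y, ∂F/∂z, F) of K[x,y,z] equals the ideal (x^2, y^2, z^2), and the quotient K[x,y,z]/(x^2,y^2,z^2) is a K-vector space of dimension 8. -/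
/-!
In characteristic 2 the partial derivatives of `F = z^2 + (ξx + ηy + θz + ι)x^2 + y^3`
are `ξx^2`, `ηx^2 + y^2` and `θx^2`. As `θ` is a unit, the Tjurina ideal contains `x^2`, hence
`y^2`, hence `z^2 = F - (ξx + ηy + θz + ι)x^2 - y·y^2`; conversely every generator visibly lies
in `(x^2, y^2, z^2)`. This monomial ideal consists of the polynomials supported on exponents
with some entry `≥ 2`, so the squarefree monomials span a complement and the quotient has
dimension `2^3`.
-/

open MvPolynomial

theorem Finsupp.natCard_setOf_forall_apply_lt {σ : Type*} [Fintype σ] (n : σ → ℕ) :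
    Nat.card {d : σ →₀ ℕ | ∀ i, d i < n i} = ∏ i, n i := by
  let e : {d : σ →₀ ℕ | ∀ i, d i < n i} ≃ ∀ i, Fin (n i) :=
    { toFun := fun d i => ⟨d.1 i, d.2 i⟩
      invFun := fun f => ⟨Finsupp.equivFunOnFinite.symm fun i => f i, fun i => (f i).2⟩
      left_inv := fun d => by ext; simp
      right_inv := fun f => by ext; simp }
  simp [Nat.card_congr e, Nat.card_pi]

namespace MvPolynomial

variable {σ R : Type*}

theorem isCompl_restrictSupport_compl [CommSemiring R] (s : Set (σ →₀ ℕ)) :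
    IsCompl (restrictSupport R s) (restrictSupport R sᶜ) := by
  constructor
  · rw [Submodule.disjoint_def]
    intro p hs hsc
    rw [← support_eq_empty, Finset.eq_empty_iff_forall_notMem]
    exact fun d hd => hsc hd (hs hd)
  · rw [codisjoint_iff, restrictSupport_eq_span, restrictSupport_eq_span, ← Submodule.span_union,
      ← Set.image_union, Set.union_compl_self, ← restrictSupport_eq_span, restrictSupport_univ]

theorem restrictScalars_span_X_pow [CommSemiring R] (n : σ → ℕ) :
    (Ideal.span (Set.range fun i => X i ^ n i) : Ideal (MvPolynomial σ R)).restrictScalars R =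
      restrictSupport R {d | ∀ i, d i < n i}ᶜ := by
  ext p
  have hrange : (Set.range fun i => (X i ^ n i : MvPolynomial σ R)) =
      (fun d => monomial d 1) '' Set.range fun i => Finsupp.single i (n i) := by
    rw [← Set.range_comp]
    simp only [Function.comp_def, X_pow_eq_monomial]
  simp only [Submodule.restrictScalars_mem, hrange, mem_ideal_span_monomial_image,
    Set.exists_range_iff, Finsupp.single_le_iff, mem_restrictSupport_iff, Set.subset_def,
    Finset.mem_coe, Set.mem_compl_iff, Set.mem_ofPred_eq, not_forall, not_lt]

theorem finrank_quotient_span_X_pow [Fintype σ] [CommRing R] [Nontrivial R] (n : σ → ℕ) :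
    Module.finrank R (MvPolynomial σ R ⧸
      Ideal.span (Set.range fun i => (X i ^ n i : MvPolynomial σ R))) = ∏ i, n i := by
  let S : Set (σ →₀ ℕ) := {d | ∀ i, d i < n i}
  have e : (MvPolynomial σ R ⧸ Ideal.span (Set.range fun i => (X i ^ n i : MvPolynomial σ R)))
      ≃ₗ[R] restrictSupport R S :=
    (Submodule.Quotient.restrictScalarsEquiv R _).symm ≪≫ₗ
      Submodule.quotientEquivOfIsCompl _ _ (by
        rw [restrictScalars_span_X_pow]; exact (isCompl_restrictSupport_compl S).symm)
  rw [e.finrank_eq, Module.finrank_eq_nat_card_basis (basisRestrictSupport R S),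
    Finsupp.natCard_setOf_forall_apply_lt]

end MvPolynomial

section

variable {R : Type*} [CommRing R] (ξ η θ ι : R)

-- The hyperplane `w = ξx + ηy + θz + ι` substituted into `z^2 + w x^2 + y^3` (type D_4^0 B_1).
noncomputable def d40b1Section : MvPolynomial (Fin 3) R :=
  X 2 ^ 2 + (C ξ * X 0 + C η * X 1 + C θ * X 2 + C ι) * X 0 ^ 2 + X 1 ^ 3

variable {ξ η θ ι} [CharP R 2]

theorem pderiv_zero_d40b1Section : pderiv 0 (d40b1Section ξ η θ ι) = C ξ * X 0 ^ 2 := by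
  simp only [d40b1Section, map_add, Derivation.leibniz, Derivation.leibniz_pow, derivation_C,
    pderiv_X, Pi.single_eq_same, Pi.single_eq_of_ne, ne_eq, Fin.reduceEq, not_false_eq_true,
    smul_eq_mul, nsmul_eq_mul]
  linear_combination (X 0 ^ 2 * C ξ + X 0 * X 1 * C η + X 0 * X 2 * C θ + X 0 * C ι) *
    CharTwo.two_eq_zero (R := MvPolynomial (Fin 3) R)

theorem pderiv_one_d40b1Section :
    pderiv 1 (d40b1Section ξ η θ ι) = C η * X 0 ^ 2 + X 1 ^ 2 := by
  simp only [d40b1Section, map_add, Derivation.leibniz, Derivation.leibniz_pow, derivation_C,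
    pderiv_X, Pi.single_eq_same, Pi.single_eq_of_ne, ne_eq, Fin.reduceEq, not_false_eq_true,
    smul_eq_mul, nsmul_eq_mul]
  linear_combination X 1 ^ 2 * CharTwo.two_eq_zero (R := MvPolynomial (Fin 3) R)

theorem pderiv_two_d40b1Section : pderiv 2 (d40b1Section ξ η θ ι) = C θ * X 0 ^ 2 := by
  simp only [d40b1Section, map_add, Derivation.leibniz, Derivation.leibniz_pow, derivation_C,
    pderiv_X, Pi.single_eq_same, Pi.single_eq_of_ne, ne_eq, Fin.reduceEq, not_false_eq_true,
    smul_eq_mul, nsmul_eq_mul]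
  linear_combination X 2 * CharTwo.two_eq_zero (R := MvPolynomial (Fin 3) R)

theorem span_pderiv_d40b1Section (hθ : IsUnit θ) :
    Ideal.span {pderiv 0 (d40b1Section ξ η θ ι), pderiv 1 (d40b1Section ξ η θ ι),
        pderiv 2 (d40b1Section ξ η θ ι), d40b1Section ξ η θ ι} =
      Ideal.span {X 0 ^ 2, X 1 ^ 2, X 2 ^ 2} := by
  rw [pderiv_zero_d40b1Section, pderiv_one_d40b1Section, pderiv_two_d40b1Section]
  refine le_antisymm (Ideal.span_le.mpr ?_) (Ideal.span_le.mpr ?_) <;>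
    simp only [Set.insert_subset_iff, Set.singleton_subset_iff, SetLike.mem_coe]
  · set I := Ideal.span {(X 0 ^ 2 : MvPolynomial (Fin 3) R), X 1 ^ 2, X 2 ^ 2}
    have hx : X 0 ^ 2 ∈ I := Ideal.subset_span (by simp)
    have hy : X 1 ^ 2 ∈ I := Ideal.subset_span (by simp)
    have hz : X 2 ^ 2 ∈ I := Ideal.subset_span (by simp)
    refine ⟨I.mul_mem_left _ hx, I.add_mem (I.mul_mem_left _ hx) hy, I.mul_mem_left _ hx, ?_⟩
    rw [d40b1Section, pow_succ' (X 1)]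
    exact I.add_mem (I.add_mem hz (I.mul_mem_left _ hx)) (I.mul_mem_left _ hy)
  · set J := Ideal.span {C ξ * X 0 ^ 2, C η * X 0 ^ 2 + X 1 ^ 2, C θ * X 0 ^ 2,
      d40b1Section ξ η θ ι}
    have hx : X 0 ^ 2 ∈ J := by
      have : C θ * X 0 ^ 2 ∈ J := Ideal.subset_span (by simp)
      simpa [← mul_assoc, ← map_mul] using J.mul_mem_left (C ↑hθ.unit⁻¹) this
    have hy : X 1 ^ 2 ∈ J := by
      have : C η * X 0 ^ 2 + X 1 ^ 2 ∈ J := Ideal.subset_span (by simp)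
      simpa using J.sub_mem this (J.mul_mem_left (C η) hx)
    have hz : X 2 ^ 2 ∈ J := by
      have hF : d40b1Section ξ η θ ι ∈ J := Ideal.subset_span (by simp)
      have : X 2 ^ 2 = d40b1Section ξ η θ ι -
          (C ξ * X 0 + C η * X 1 + C θ * X 2 + C ι) * X 0 ^ 2 - X 1 * X 1 ^ 2 := by
        rw [d40b1Section]; ring
      rw [this]
      exact J.sub_mem (J.sub_mem hF (J.mul_mem_left _ hx)) (J.mul_mem_left _ hy)
    exact ⟨hx, hy, hz⟩

end

theorem stmt_14_general (k : Type*) [Field k] [CharP k 2]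
    (K : Type*)
    [Field K] [Algebra (MvPolynomial (Fin 4) k) K] [IsFractionRing (MvPolynomial (Fin 4) k) K]
    (ξ η θ ι : K)
    (hθ : θ = algebraMap (MvPolynomial (Fin 4) k) K (X 2))
    (F : MvPolynomial (Fin 3) K)
    (hF : F = X 2 ^ 2 + (C ξ * X 0 + C η * X 1 + C θ * X 2 + C ι) * X 0 ^ 2 + X 1 ^ 3) :
    Ideal.span {pderiv 0 F, pderiv 1 F, pderiv 2 F, F} =
      Ideal.span {(X 0 ^ 2 : MvPolynomial (Fin 3) K), X 1 ^ 2, X 2 ^ 2} ∧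
    Module.finrank K
      (MvPolynomial (Fin 3) K ⧸
        Ideal.span {(X 0 ^ 2 : MvPolynomial (Fin 3) K), X 1 ^ 2, X 2 ^ 2}) = 8 := by
  obtain rfl : F = d40b1Section ξ η θ ι := hF
  have hinj := IsFractionRing.injective (MvPolynomial (Fin 4) k) K
  have : CharP K 2 := charP_of_injective_algebraMap hinj 2
  have hθu : IsUnit θ := hθ ▸ ((map_ne_zero_iff _ hinj).mpr (X_ne_zero 2)).isUnit
  have hsquares : ({X 0 ^ 2, X 1 ^ 2, X 2 ^ 2} : Set (MvPolynomial (Fin 3) K)) =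
      Set.range fun i => X i ^ 2 := by
    ext; simp [Fin.exists_fin_succ, eq_comm]
  refine ⟨span_pderiv_d40b1Section hθu, ?_⟩
  rw [hsquares, finrank_quotient_span_X_pow]
  simp

/-- Generic hyperplane section of type `D_4^0 B_1`: over `K = k(ξ,η,θ,ι)`, for
`F = z^2 + (ξ*x + η*y + θ*z + ι)*x^2 + y^3`, the Tjurina ideal
`(∂F/∂x, ∂F/∂y, ∂F/∂z, F)` equals `(x^2, y^2, z^2)` and the Tjurina algebra has
`K`-dimension 8. Here `ξ, η, θ, ι` are the images in `K` of the four variables. -/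
theorem stmt_14 (k : Type*) [Field k] [CharP k 2]
    (K : Type*)
    [Field K] [Algebra (MvPolynomial (Fin 4) k) K] [IsFractionRing (MvPolynomial (Fin 4) k) K]
    (ξ η θ ι : K)
    (hξ : ξ = algebraMap (MvPolynomial (Fin 4) k) K (X 0))
    (hη : η = algebraMap (MvPolynomial (Fin 4) k) K (X 1))
    (hθ : θ = algebraMap (MvPolynomial (Fin 4) k) K (X 2))
    (hι : ι = algebraMap (MvPolynomial (Fin 4) k) K (X 3))
    (F : MvPolynomial (Fin 3) K)
    (hF : F = X 2 ^ 2 + (C ξ * X 0 + C η * X 1 + C θ * X 2 + C ι) * X 0 ^ 2 + X 1 ^ 3) :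
    Ideal.span {pderiv 0 F, pderiv 1 F, pderiv 2 F, F} =
      Ideal.span {(X 0 ^ 2 : MvPolynomial (Fin 3) K), X 1 ^ 2, X 2 ^ 2} ∧
    Module.finrank K
      (MvPolynomial (Fin 3) K ⧸
        Ideal.span {(X 0 ^ 2 : MvPolynomial (Fin 3) K), X 1 ^ 2, X 2 ^ 2}) = 8 :=
  stmt_14_general k K ξ η θ ι hθ F hF
end

section
/- Let k be an algebraically closed field of characteristic 2 and f = z^2 + x*y^2 + x*y*z + w*x^2 (type D_4^1 B_2). Then: (1) the singular locus of the hypersurface f = 0 is the line {x = y = z = 0}; and (2) f ∉ (x^2, y^2, z^2, w^2) in k[x,y,z,w], so the hypersurface is F-pure at the origin by Fedder's criterion. -/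
/-!
Writing `f = z² + x y² + x y z + w x²`, in characteristic 2 the partials are `y² + y z`, `x z`,
`x y` and `x²`. At a singular point `x² = 0` forces `x = 0`, then `f = z²` forces `z = 0`, and
then `∂f/∂x = y²` forces `y = 0`; conversely every partial lies in `(x, y, z)`.
For the second part, `(x², y², z², w²)` is a monomial ideal, so membership is read off the support:
the squarefree monomial `x y z` occurs in `f` and is divisible by no generator.
-/

open MvPolynomial

theorem MvPolynomial.mem_ideal_span_X_pow_image {σ R : Type*} [CommSemiring R]
    {x : MvPolynomial σ R} {s : Set σ} {n : ℕ} :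
    x ∈ Ideal.span ((fun i => X i ^ n) '' s : Set (MvPolynomial σ R)) ↔
      ∀ m ∈ x.support, ∃ i ∈ s, n ≤ m i := by
  have := @mem_ideal_span_monomial_image σ R _ x ((fun i => Finsupp.single i n) '' s)
  simp only [Set.image_image, ← X_pow_eq_monomial] at this
  simpa [Finsupp.single_le_iff] using this

section D41B2

variable {R : Type*} [CommRing R]

theorem d41B2_singular_iff [IsReduced R] {a b c d : R}
    (hf : c ^ 2 + a * b ^ 2 + a * b * c + d * a ^ 2 = 0) :
    (b ^ 2 + b * c = 0 ∧ a * c = 0 ∧ a * b = 0 ∧ a ^ 2 = 0) ↔ (a = 0 ∧ b = 0 ∧ c = 0) := by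
  constructor
  · rintro ⟨hx, -, -, ha⟩
    obtain rfl : a = 0 := IsReduced.eq_zero a ⟨2, ha⟩
    obtain rfl : c = 0 := IsReduced.eq_zero c ⟨2, by linear_combination hf⟩
    exact ⟨rfl, IsReduced.eq_zero b ⟨2, by linear_combination hx⟩, rfl⟩
  · rintro ⟨rfl, rfl, rfl⟩
    simp

local notation "f" => (X 2 ^ 2 + X 0 * X 1 ^ 2 + X 0 * X 1 * X 2 + X 3 * X 0 ^ 2 :
  MvPolynomial (Fin 4) R)

theorem coeff_xyz_d41B2 :
    coeff (Finsupp.single 0 1 + Finsupp.single 1 1 + Finsupp.single 2 1) f = 1 := by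
  simp only [X, monomial_pow, monomial_mul, coeff_add, coeff_monomial, mul_one, one_pow]
  simp [Finsupp.ext_iff, Fin.forall_fin_succ]

theorem pderiv_three_d41B2 : pderiv 3 f = X 0 ^ 2 := by
  simp

variable [CharP R 2]

theorem pderiv_zero_d41B2 : pderiv 0 f = X 1 ^ 2 + X 1 * X 2 := by
  simp [CharTwo.two_eq_zero, mul_comm]

theorem pderiv_one_d41B2 : pderiv 1 f = X 0 * X 2 := by
  simp [CharTwo.two_eq_zero, mul_comm]

theorem pderiv_two_d41B2 : pderiv 2 f = X 0 * X 1 := by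
  simp [CharTwo.two_eq_zero, mul_comm]

end D41B2

theorem stmt_18_general (k : Type*) [Field k] [CharP k 2]
    (f : MvPolynomial (Fin 4) k)
    (hf : f = X 2 ^ 2 + X 0 * X 1 ^ 2 + X 0 * X 1 * X 2 + X 3 * X 0 ^ 2) :
    (∀ a b c d : k, eval ![a, b, c, d] f = 0 →
      ((∀ i : Fin 4, eval ![a, b, c, d] (pderiv i f) = 0) ↔ (a = 0 ∧ b = 0 ∧ c = 0))) ∧
    f ∉ Ideal.span {(X 0 ^ 2 : MvPolynomial (Fin 4) k), X 1 ^ 2, X 2 ^ 2, X 3 ^ 2} := by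
  subst hf
  constructor
  · intro a b c d hf0
    rw [← d41B2_singular_iff (by simpa using hf0)]
    simp only [Fin.forall_fin_succ, Fin.reduceSucc, IsEmpty.forall_iff, and_true,
      pderiv_zero_d41B2, pderiv_one_d41B2, pderiv_two_d41B2, pderiv_three_d41B2]
    simp only [map_add, map_mul, map_pow, eval_X]
    rfl
  · have hgens : ({X 0 ^ 2, X 1 ^ 2, X 2 ^ 2, X 3 ^ 2} : Set (MvPolynomial (Fin 4) k)) =
        (fun i => X i ^ 2) '' Set.univ := by
      simp [← Finset.coe_univ, Fin.univ_succ, Set.image_insert_eq]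
    rw [hgens, mem_ideal_span_X_pow_image]
    push Not
    refine ⟨Finsupp.single 0 1 + Finsupp.single 1 1 + Finsupp.single 2 1, ?_, fun i _ => ?_⟩
    · rw [mem_support_iff, coeff_xyz_d41B2]
      exact one_ne_zero
    · fin_cases i <;> simp

/-- Type `D_4^1 B_2`: for `f = z^2 + x*y^2 + x*y*z + w*x^2`,
(1) the singular locus is the line `{x = y = z = 0}`, and
(2) `f ∉ (x^2, y^2, z^2, w^2)`, so the hypersurface is F-pure at the origin. -/
theorem stmt_18 (k : Type*) [Field k] [IsAlgClosed k] [CharP k 2]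
    (f : MvPolynomial (Fin 4) k)
    (hf : f = X 2 ^ 2 + X 0 * X 1 ^ 2 + X 0 * X 1 * X 2 + X 3 * X 0 ^ 2) :
    (∀ a b c d : k, eval ![a, b, c, d] f = 0 →
      ((∀ i : Fin 4, eval ![a, b, c, d] (pderiv i f) = 0) ↔ (a = 0 ∧ b = 0 ∧ c = 0))) ∧
    f ∉ Ideal.span {(X 0 ^ 2 : MvPolynomial (Fin 4) k), X 1 ^ 2, X 2 ^ 2, X 3 ^ 2} :=
  stmt_18_general k f hf
end
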